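/- For any guaranteed scoring game G and integer n ≥ b(G) (the birthday of G), the pass-allowed Left-stop satisfies L̲s(G) = Ls(G − n̂), where n̂ is the waiting-move game (the image of the Normal-play integer n) and −n̂ its conjugate. Symmetrically, R̄s(G) = Rs(G + n̂). -/

import Mathlib

/-- A scoring game: `la`/`ra` are the atom values (relevant when the
corresponding option list is empty), `L`/`R` the Left and Right options. -/
inductive SG : Type
  | mk (la ra : ℝ) (L R : List SG) : SG

namespace SG

theorem sizeOf_lt_of_mem {g : SG} {l : List SG} (h : g ∈ l) : sizeOf g < sizeOf l :=
  List.sizeOf_lt_of_mem h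

noncomputable instance : DecidableEq SG := Classical.decEq _

def la : SG → ℝ | mk a _ _ _ => a
def ra : SG → ℝ | mk _ b _ _ => b
def L : SG → List SG | mk _ _ l _ => l
def R : SG → List SG | mk _ _ _ r => r

/-- The list of atom values occurring in atomic followers of a game. -/
def atomList : SG → List ℝ
  | mk a b ls rs =>
    (if ls.isEmpty then [a] else (ls.attach.map (fun x => atomList x.1)).flatten)
    ++ (if rs.isEmpty then [b] else (rs.attach.map (fun x => atomList x.1)).flatten)
decreasing_by all_goals (simp only [SG.mk.sizeOf_spec]; (first | (have := sizeOf_lt_of_mem x.2) | (have := sizeOf_lt_of_mem (by assumption : x ∈ _))); omega)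

/-- The guaranteed condition. -/
def Guaranteed : SG → Prop
  | mk a b ls rs =>
    (∀ x ∈ ls, Guaranteed x) ∧ (∀ x ∈ rs, Guaranteed x) ∧
    (ls = [] → ∀ s ∈ (mk a b ls rs).atomList, a ≤ s) ∧
    (rs = [] → ∀ s ∈ (mk a b ls rs).atomList, s ≤ b)
decreasing_by all_goals (simp only [SG.mk.sizeOf_spec]; (first | (have := sizeOf_lt_of_mem x.2) | (have := sizeOf_lt_of_mem (by assumption : x ∈ _))); omega)

/-- Disjunctive sum. -/
noncomputable def add : SG → SG → SG
  | mk a1 b1 L1 R1, mk a2 b2 L2 R2 =>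
    mk (a1 + a2) (b1 + b2)
      (L1.attach.map (fun x => add x.1 (mk a2 b2 L2 R2))
        ++ L2.attach.map (fun x => add (mk a1 b1 L1 R1) x.1))
      (R1.attach.map (fun x => add x.1 (mk a2 b2 L2 R2))
        ++ R2.attach.map (fun x => add (mk a1 b1 L1 R1) x.1))
termination_by g h => sizeOf g + sizeOf h
decreasing_by all_goals (simp only [SG.mk.sizeOf_spec]; (first | (have := sizeOf_lt_of_mem x.2) | (have := sizeOf_lt_of_mem (by assumption : x ∈ _))); omega)

/-- Left- and Right-stops (as a pair). -/
noncomputable def stops : SG → ℝ × ℝ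
  | mk a b ls rs =>
    (if ls.isEmpty then a else (WithBot.unbotD 0 (ls.attach.map (fun x => (stops x.1).2)).maximum),
     if rs.isEmpty then b else (WithTop.untopD 0 (rs.attach.map (fun x => (stops x.1).1)).minimum))
decreasing_by all_goals (simp only [SG.mk.sizeOf_spec]; (first | (have := sizeOf_lt_of_mem x.2) | (have := sizeOf_lt_of_mem (by assumption : x ∈ _))); omega)

noncomputable def Ls (g : SG) : ℝ := g.stops.1
noncomputable def Rs (g : SG) : ℝ := g.stops.2

/-- The conjugate: interchange Left and Right and negate atoms. -/
noncomputable def conj : SG → SG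
  | mk a b ls rs =>
    mk (-b) (-a) (rs.attach.map (fun x => conj x.1)) (ls.attach.map (fun x => conj x.1))
decreasing_by all_goals (simp only [SG.mk.sizeOf_spec]; (first | (have := sizeOf_lt_of_mem x.2) | (have := sizeOf_lt_of_mem (by assumption : x ∈ _))); omega)

/-- The game ⟨∅^s | ∅^s⟩ of a real number `s`. -/
def num (s : ℝ) : SG := mk s s [] []

/-- The zero game ⟨∅^0 | ∅^0⟩. -/
def zero : SG := num 0

/-- Waiting moves: the image of the Normal-play integer `n`. -/
def wait : ℕ → SG
  | 0 => zero
  | n + 1 => mk 0 0 [wait n] []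

/-- Birthday: the depth of the game tree. -/
def birthday : SG → ℕ
  | mk _ _ ls rs =>
    max (WithBot.unbotD 0 (ls.attach.map (fun x => birthday x.1 + 1)).maximum)
        (WithBot.unbotD 0 (rs.attach.map (fun x => birthday x.1 + 1)).maximum)
decreasing_by all_goals (simp only [SG.mk.sizeOf_spec]; (first | (have := sizeOf_lt_of_mem x.2) | (have := sizeOf_lt_of_mem (by assumption : x ∈ _))); omega)

/-- `Ge G H` is the order `G ≽ H`. -/
def Ge (G H : SG) : Prop :=
  ∀ X : SG, X.Guaranteed → Ls (G.add X) ≥ Ls (H.add X) ∧ Rs (G.add X) ≥ Rs (H.add X)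

/-- Equivalence `G ∼ H`. -/
def Equiv (G H : SG) : Prop := Ge G H ∧ Ge H G

/-- Right's pass-allowed Left-stop `L̲s(G) = min_n Ls(G - n̂)`. -/
noncomputable def lsU (G : SG) : ℝ := ⨅ n : ℕ, Ls (G.add (wait n).conj)

/-- Left's pass-allowed Right-stop `R̄s(G) = max_n Rs(G + n̂)`. -/
noncomputable def rsO (G : SG) : ℝ := ⨆ n : ℕ, Rs (G.add (wait n))

/-- `L̄s(G) = max_n Ls(G + n̂)`. -/
noncomputable def lsO (G : SG) : ℝ := ⨆ n : ℕ, Ls (G.add (wait n))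

/-- `R̲s(G) = min_n Rs(G + n̂)`. -/
noncomputable def rsU (G : SG) : ℝ := ⨅ n : ℕ, Rs (G.add (wait n))

/-- Identity of games: same tree structure (up to reordering of options),
with identical atoms at atomic positions. -/
def Ident : SG → SG → Prop
  | mk a1 b1 L1 R1, mk a2 b2 L2 R2 =>
    (L1 = [] ↔ L2 = []) ∧ (L1 = [] → a1 = a2) ∧
    (R1 = [] ↔ R2 = []) ∧ (R1 = [] → b1 = b2) ∧
    (∀ x ∈ L1, ∃ y : {z // z ∈ L2}, Ident x y.1) ∧
    (∀ y ∈ L2, ∃ x : {z // z ∈ L1}, Ident x.1 y) ∧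
    (∀ x ∈ R1, ∃ y : {z // z ∈ R2}, Ident x y.1) ∧
    (∀ y ∈ R2, ∃ x : {z // z ∈ R1}, Ident x.1 y)
termination_by g h => sizeOf g
decreasing_by all_goals (simp only [SG.mk.sizeOf_spec]; (first | (have := sizeOf_lt_of_mem x.2) | (have := sizeOf_lt_of_mem (by assumption : x ∈ _))); omega)

/-- `Linked H G`: `H` is linked to `G` (by some guaranteed `T`). -/
def Linked (H G : SG) : Prop :=
  ∃ T : SG, T.Guaranteed ∧ Ls (H.add T) < 0 ∧ 0 < Rs (G.add T)

/-- Replace every atom of `G` by `∅^x`. -/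
def subst (v : ℝ) : SG → SG
  | mk _ _ ls rs =>
    mk v v (ls.attach.map (fun x => subst v x.1)) (rs.attach.map (fun x => subst v x.1))
decreasing_by all_goals (simp only [SG.mk.sizeOf_spec]; (first | (have := sizeOf_lt_of_mem x.2) | (have := sizeOf_lt_of_mem (by assumption : x ∈ _))); omega)

/-- The maximum atom value in `G`. -/
noncomputable def maxAtom (G : SG) : ℝ := WithBot.unbotD 0 G.atomList.maximum

/-- The minimum atom value in `G`. -/
noncomputable def minAtom (G : SG) : ℝ := WithTop.untopD 0 G.atomList.minimum

/-! Right's waiting moves in `G - m̂` are passes. More passes can only help Right, so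
`m ↦ Ls (G - m̂)` is antitone; the guaranteed condition is what makes the first pass harmless
when Right has no move in `G`: passing leads to `Ls G`, which is at most Right's atom `b`, because
`b` bounds every atom of `G`. A pass only matters while `G` is still being played, which lasts at
most `b(G)` moves, so the sequence is constant from `m = b(G)` on and its infimum is attained
there. The statement about `R̄s` is the conjugate one, since `Rs (G + n̂) = -Ls (Ḡ - n̂)`. -/

section ListExtrema

variable {α : Type*} [LinearOrder α] {l : List α}

theorem coe_unbotD_maximum (h : l ≠ []) (d : α) :
    ((l.maximum.unbotD d : α) : WithBot α) = l.maximum := by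
  obtain ⟨m, hm⟩ := WithBot.ne_bot_iff_exists.mp (List.maximum_ne_bot_of_ne_nil h)
  rw [← hm, WithBot.unbotD_coe]

theorem coe_untopD_minimum (h : l ≠ []) (d : α) :
    ((l.minimum.untopD d : α) : WithTop α) = l.minimum := by
  obtain ⟨m, hm⟩ := WithTop.ne_top_iff_exists.mp (List.minimum_ne_top_of_ne_nil h)
  rw [← hm, WithTop.untopD_coe]

theorem unbotD_maximum_mem (h : l ≠ []) (d : α) : l.maximum.unbotD d ∈ l :=
  List.maximum_mem (coe_unbotD_maximum h d).symm

theorem untopD_minimum_mem (h : l ≠ []) (d : α) : l.minimum.untopD d ∈ l :=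
  List.minimum_mem (coe_untopD_minimum h d).symm

theorem le_unbotD_maximum {x : α} (hx : x ∈ l) (d : α) : x ≤ l.maximum.unbotD d :=
  List.le_maximum_of_mem hx (coe_unbotD_maximum (List.ne_nil_of_mem hx) d).symm

theorem untopD_minimum_le {x : α} (hx : x ∈ l) (d : α) : l.minimum.untopD d ≤ x :=
  List.minimum_le_of_mem hx (coe_untopD_minimum (List.ne_nil_of_mem hx) d).symm

theorem untopD_minimum_concat (h : l ≠ []) (c d : α) :
    (l ++ [c]).minimum.untopD d = min (l.minimum.untopD d) c := by
  rw [List.minimum_concat]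
  nth_rw 1 [← coe_untopD_minimum h d]
  rw [← WithTop.coe_min, WithTop.untopD_coe]

variable {ι : Type*} {s : List ι} {f g : ι → α}

theorem unbotD_maximum_map_mono (hfg : ∀ x ∈ s, f x ≤ g x) (d : α) :
    (s.map f).maximum.unbotD d ≤ (s.map g).maximum.unbotD d := by
  rcases eq_or_ne s [] with rfl | hs
  · rfl
  obtain ⟨x, hx, hfx⟩ :=
    List.mem_map.mp (unbotD_maximum_mem (l := s.map f) (by simpa using hs) d)
  rw [← hfx]
  exact (hfg x hx).trans (le_unbotD_maximum (List.mem_map_of_mem hx) d)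

theorem untopD_minimum_map_mono (hfg : ∀ x ∈ s, f x ≤ g x) (d : α) :
    (s.map f).minimum.untopD d ≤ (s.map g).minimum.untopD d := by
  rcases eq_or_ne s [] with rfl | hs
  · rfl
  obtain ⟨x, hx, hgx⟩ :=
    List.mem_map.mp (untopD_minimum_mem (l := s.map g) (by simpa using hs) d)
  rw [← hgx]
  exact (untopD_minimum_le (List.mem_map_of_mem hx) d).trans (hfg x hx)

end ListExtrema

theorem unbotD_maximum_map_neg {α ι : Type*} [AddCommGroup α] [LinearOrder α]
    [IsOrderedAddMonoid α] {s : List ι} (hs : s ≠ []) (f : ι → α) (d d' : α) :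
    (s.map (fun x => -f x)).maximum.unbotD d = -(s.map f).minimum.untopD d' := by
  apply le_antisymm
  · obtain ⟨x, hx, hfx⟩ := List.mem_map.mp (unbotD_maximum_mem (by simpa using hs) d)
    rw [← hfx, neg_le_neg_iff]
    exact untopD_minimum_le (List.mem_map_of_mem hx) d'
  · obtain ⟨x, hx, hfx⟩ := List.mem_map.mp (untopD_minimum_mem (by simpa using hs) d')
    rw [← hfx]
    exact le_unbotD_maximum (List.mem_map_of_mem (f := fun x => -f x) hx) d

theorem induction {P : SG → Prop}
    (mk : ∀ a b ls rs, (∀ x ∈ ls, P x) → (∀ x ∈ rs, P x) → P (mk a b ls rs)) : ∀ G, P G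
  | .mk a b ls rs => mk a b ls rs (fun x _ => induction mk x) (fun x _ => induction mk x)
decreasing_by all_goals (simp only [SG.mk.sizeOf_spec]; have := sizeOf_lt_of_mem ‹_›; omega)

theorem add_mk (a₁ b₁ : ℝ) (L₁ R₁ : List SG) (a₂ b₂ : ℝ) (L₂ R₂ : List SG) :
    (mk a₁ b₁ L₁ R₁).add (mk a₂ b₂ L₂ R₂) = mk (a₁ + a₂) (b₁ + b₂)
      (L₁.map (·.add (mk a₂ b₂ L₂ R₂)) ++ L₂.map (mk a₁ b₁ L₁ R₁).add)
      (R₁.map (·.add (mk a₂ b₂ L₂ R₂)) ++ R₂.map (mk a₁ b₁ L₁ R₁).add) := by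
  rw [add]
  simp

theorem conj_mk (a b : ℝ) (ls rs : List SG) :
    (mk a b ls rs).conj = mk (-b) (-a) (rs.map conj) (ls.map conj) := by
  rw [conj]
  simp

theorem Ls_mk (a b : ℝ) (ls rs : List SG) :
    Ls (mk a b ls rs) = if ls.isEmpty then a else (ls.map Rs).maximum.unbotD 0 := by
  rw [Ls, stops, List.attach_map_val (f := fun x => (stops x).2)]
  rfl

theorem Rs_mk (a b : ℝ) (ls rs : List SG) :
    Rs (mk a b ls rs) = if rs.isEmpty then b else (rs.map Ls).minimum.untopD 0 := by
  rw [Rs, stops, List.attach_map_val (f := fun x => (stops x).1)]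
  rfl

theorem atomList_mk (a b : ℝ) (ls rs : List SG) :
    (mk a b ls rs).atomList =
      (if ls.isEmpty then [a] else (ls.map atomList).flatten)
      ++ (if rs.isEmpty then [b] else (rs.map atomList).flatten) := by
  rw [atomList, List.attach_map_val (f := atomList), List.attach_map_val (f := atomList)]

theorem birthday_mk (a b : ℝ) (ls rs : List SG) :
    (mk a b ls rs).birthday =
      max ((ls.map (·.birthday + 1)).maximum.unbotD 0)
        ((rs.map (·.birthday + 1)).maximum.unbotD 0) := by
  rw [birthday]
  simp only [List.attach_map_val (f := fun x : SG => x.birthday + 1)]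

theorem guaranteed_mk {a b : ℝ} {ls rs : List SG} :
    (mk a b ls rs).Guaranteed ↔
      (∀ x ∈ ls, x.Guaranteed) ∧ (∀ x ∈ rs, x.Guaranteed) ∧
      (ls = [] → ∀ s ∈ (mk a b ls rs).atomList, a ≤ s) ∧
      (rs = [] → ∀ s ∈ (mk a b ls rs).atomList, s ≤ b) := by
  rw [Guaranteed]

theorem birthday_lt_of_mem_L {x : SG} {a b : ℝ} {ls rs : List SG} (hx : x ∈ ls) :
    x.birthday < (mk a b ls rs).birthday := by
  have := le_unbotD_maximum (List.mem_map_of_mem (f := (·.birthday + 1)) hx) 0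
  rw [birthday_mk]
  omega

theorem birthday_lt_of_mem_R {x : SG} {a b : ℝ} {ls rs : List SG} (hx : x ∈ rs) :
    x.birthday < (mk a b ls rs).birthday := by
  have := le_unbotD_maximum (List.mem_map_of_mem (f := (·.birthday + 1)) hx) 0
  rw [birthday_mk]
  omega

theorem stops_mem_atomList (G : SG) : Ls G ∈ G.atomList ∧ Rs G ∈ G.atomList := by
  induction G using SG.induction with
  | mk a b ls rs ihL ihR =>
    constructor
    · rw [Ls_mk, atomList_mk]
      by_cases h : ls.isEmpty
      · rw [if_pos h, if_pos h]
        exact List.mem_append_left _ (List.mem_singleton_self a)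
      · obtain ⟨x, hx, hxs⟩ :=
          List.mem_map.mp (unbotD_maximum_mem (l := ls.map Rs) (by simpa using h) 0)
        rw [if_neg h, if_neg h, ← hxs]
        exact List.mem_append_left _
          (List.mem_flatten_of_mem (List.mem_map_of_mem hx) (ihL x hx).2)
    · rw [Rs_mk, atomList_mk]
      by_cases h : rs.isEmpty
      · rw [if_pos h, if_pos h]
        exact List.mem_append_right _ (List.mem_singleton_self b)
      · obtain ⟨x, hx, hxs⟩ :=
          List.mem_map.mp (untopD_minimum_mem (l := rs.map Ls) (by simpa using h) 0)
        rw [if_neg h, if_neg h, ← hxs]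
        exact List.mem_append_right _
          (List.mem_flatten_of_mem (List.mem_map_of_mem hx) (ihR x hx).1)

theorem stops_conj (G : SG) : Ls G.conj = -Rs G ∧ Rs G.conj = -Ls G := by
  induction G using SG.induction with
  | mk a b ls rs ihL ihR =>
    rw [conj_mk, Ls_mk, Rs_mk, Rs_mk, Ls_mk, List.isEmpty_map, List.isEmpty_map, List.map_map,
      List.map_map]
    constructor
    · split_ifs with h
      · rfl
      · rw [List.map_congr_left (f := Rs ∘ conj) (g := fun x => -Ls x) fun x hx => (ihR x hx).2]
        exact unbotD_maximum_map_neg (by simpa using h) Ls 0 0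
    · split_ifs with h
      · rfl
      · rw [List.map_congr_left (f := Ls ∘ conj) (g := fun x => -Rs x) fun x hx => (ihL x hx).1]
        have := unbotD_maximum_map_neg (by simpa using h) (fun x => -Rs x) 0 0
        simp only [neg_neg] at this
        rw [this, neg_neg]

theorem conj_add (G H : SG) : (G.add H).conj = G.conj.add H.conj := by
  induction G using SG.induction generalizing H with
  | mk a₁ b₁ L₁ R₁ ihL₁ ihR₁ =>
    induction H using SG.induction with
    | mk a₂ b₂ L₂ R₂ ihL₂ ihR₂ =>
      simp only [add_mk, conj_mk, List.map_append, List.map_map, neg_add]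
      congr 1 <;> congr 1 <;> refine List.map_congr_left fun x hx => ?_
      · simp [ihR₁ x hx, conj_mk]
      · simp [ihR₂ x hx, conj_mk]
      · simp [ihL₁ x hx, conj_mk]
      · simp [ihL₂ x hx, conj_mk]

theorem birthday_conj (G : SG) : G.conj.birthday = G.birthday := by
  induction G using SG.induction with
  | mk a b ls rs ihL ihR =>
    rw [conj_mk, birthday_mk, birthday_mk, List.map_map, List.map_map, max_comm]
    congr 3 <;> exact List.map_congr_left fun x hx => by simp [ihL, ihR, hx]

theorem mem_atomList_conj (G : SG) (s : ℝ) : s ∈ G.conj.atomList ↔ -s ∈ G.atomList := by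
  induction G using SG.induction generalizing s with
  | mk a b ls rs ihL ihR =>
    rw [conj_mk, atomList_mk, atomList_mk, List.mem_append, List.mem_append, or_comm]
    simp only [List.isEmpty_map, List.map_map]
    refine or_congr ?_ ?_ <;> split_ifs
    · simp [neg_eq_iff_eq_neg]
    · simpa using exists_congr fun x => and_congr_right fun hx => ihL x hx s
    · simp [neg_eq_iff_eq_neg]
    · simpa using exists_congr fun x => and_congr_right fun hx => ihR x hx s

theorem Guaranteed.conj {G : SG} (hG : G.Guaranteed) : G.conj.Guaranteed := by
  induction G using SG.induction with
  | mk a b ls rs ihL ihR =>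
    obtain ⟨hL, hR, ha, hb⟩ := guaranteed_mk.mp hG
    have hatoms := mem_atomList_conj (mk a b ls rs)
    rw [conj_mk] at hatoms ⊢
    refine guaranteed_mk.mpr ⟨?_, ?_, fun h s hs => ?_, fun h s hs => ?_⟩
    · simpa using fun x hx => ihR x hx (hR x hx)
    · simpa using fun x hx => ihL x hx (hL x hx)
    · linarith [hb (by simpa using h) _ ((hatoms s).mp hs)]
    · linarith [ha (by simpa using h) _ ((hatoms s).mp hs)]

theorem Rs_add_eq_neg_Ls_conj_add (G H : SG) : Rs (G.add H) = -Ls (G.conj.add H.conj) := by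
  rw [← conj_add, (stops_conj _).1, neg_neg]

theorem add_mk_zero_zero_nil_nil (G : SG) : G.add (mk 0 0 [] []) = G := by
  induction G using SG.induction with
  | mk a b ls rs ihL ihR =>
    rw [add_mk]
    simp only [add_zero, List.map_nil, List.append_nil]
    rw [List.map_congr_left ihL, List.map_congr_left ihR, List.map_id', List.map_id']

theorem conj_wait_zero : (wait 0).conj = mk 0 0 [] [] := by
  simp [wait, zero, num, conj_mk]

theorem conj_wait_succ (k : ℕ) : (wait (k + 1)).conj = mk 0 0 [] [(wait k).conj] := by
  simp [wait, conj_mk]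

theorem add_conj_wait_zero (G : SG) : G.add (wait 0).conj = G := by
  rw [conj_wait_zero, add_mk_zero_zero_nil_nil]

theorem Ls_mk_add_conj_wait (a b : ℝ) (ls rs : List SG) (k : ℕ) :
    Ls ((mk a b ls rs).add (wait k).conj) =
      if ls.isEmpty then a else (ls.map fun x => Rs (x.add (wait k).conj)).maximum.unbotD 0 := by
  cases k <;> simp [conj_wait_zero, conj_wait_succ, add_mk, Ls_mk, Function.comp_def]

theorem Rs_mk_add_conj_wait_succ (a b : ℝ) (ls rs : List SG) (k : ℕ) :
    Rs ((mk a b ls rs).add (wait (k + 1)).conj) =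
      if rs.isEmpty then Ls ((mk a b ls rs).add (wait k).conj)
      else min ((rs.map fun x => Ls (x.add (wait (k + 1)).conj)).minimum.untopD 0)
        (Ls ((mk a b ls rs).add (wait k).conj)) := by
  rw [conj_wait_succ, add_mk, Rs_mk, ← conj_wait_succ]
  simp only [add_zero, List.map_nil, List.map_cons]
  rw [if_neg (by simp), List.map_append, List.map_map, List.map_singleton]
  split_ifs with h
  · simp [List.isEmpty_iff.mp h]
  · rw [untopD_minimum_concat (by simpa using h)]
    rfl

theorem stops_add_conj_wait_succ_le {G : SG} (hG : G.Guaranteed) (m : ℕ) :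
    Ls (G.add (wait (m + 1)).conj) ≤ Ls (G.add (wait m).conj) ∧
      Rs (G.add (wait (m + 1)).conj) ≤ Rs (G.add (wait m).conj) := by
  induction G using SG.induction generalizing m with
  | mk a b ls rs ihL ihR =>
    obtain ⟨hL, hR, -, hb⟩ := guaranteed_mk.mp hG
    have hLs (k : ℕ) : Ls ((mk a b ls rs).add (wait (k + 1)).conj)
        ≤ Ls ((mk a b ls rs).add (wait k).conj) := by
      rw [Ls_mk_add_conj_wait, Ls_mk_add_conj_wait]
      split_ifs
      · rfl
      · exact unbotD_maximum_map_mono (fun x hx => (ihL x hx (hL x hx) k).2) 0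
    refine ⟨hLs m, ?_⟩
    rw [Rs_mk_add_conj_wait_succ]
    cases m with
    | zero =>
      rw [add_conj_wait_zero, Rs_mk]
      split_ifs with hrs
      · exact hb (List.isEmpty_iff.mp hrs) _ (stops_mem_atomList _).1
      · refine min_le_of_left_le (untopD_minimum_map_mono (fun x hx => ?_) 0)
        simpa only [add_conj_wait_zero] using (ihR x hx (hR x hx) 0).1
    | succ k =>
      rw [Rs_mk_add_conj_wait_succ]
      split_ifs
      · exact hLs k
      · exact min_le_min
          (untopD_minimum_map_mono (fun x hx => (ihR x hx (hR x hx) (k + 1)).1) 0) (hLs k)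

theorem stops_add_conj_wait_succ_eq (G : SG) (m : ℕ) :
    (G.birthday ≤ m → Ls (G.add (wait (m + 1)).conj) = Ls (G.add (wait m).conj)) ∧
      (G.birthday < m → Rs (G.add (wait (m + 1)).conj) = Rs (G.add (wait m).conj)) := by
  induction G using SG.induction generalizing m with
  | mk a b ls rs ihL ihR =>
    have hLs (k : ℕ) (hk : (mk a b ls rs).birthday ≤ k) :
        Ls ((mk a b ls rs).add (wait (k + 1)).conj) = Ls ((mk a b ls rs).add (wait k).conj) := by
      rw [Ls_mk_add_conj_wait, Ls_mk_add_conj_wait, List.map_congr_left fun x hx =>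
        (ihL x hx k).2 ((birthday_lt_of_mem_L hx).trans_le hk)]
    refine ⟨hLs m, fun hm => ?_⟩
    obtain ⟨k, rfl⟩ : ∃ k, m = k + 1 := ⟨m - 1, by omega⟩
    rw [Rs_mk_add_conj_wait_succ, Rs_mk_add_conj_wait_succ, hLs k (by omega),
      List.map_congr_left fun x hx => (ihR x hx (k + 1)).1
        (by have := birthday_lt_of_mem_R (a := a) (b := b) (ls := ls) hx; omega)]

theorem Ls_add_conj_wait_antitone {G : SG} (hG : G.Guaranteed) :
    Antitone fun m => Ls (G.add (wait m).conj) :=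
  antitone_nat_of_succ_le fun m => (stops_add_conj_wait_succ_le hG m).1

theorem Ls_add_conj_wait_eq_of_birthday_le {G : SG} {n m : ℕ} (hn : G.birthday ≤ n)
    (hm : n ≤ m) : Ls (G.add (wait m).conj) = Ls (G.add (wait n).conj) := by
  induction m, hm using Nat.le_induction with
  | base => rfl
  | succ m hnm ih => rw [(stops_add_conj_wait_succ_eq G m).1 (hn.trans hnm), ih]

theorem isLeast_Ls_add_conj_wait {G : SG} (hG : G.Guaranteed) {n : ℕ} (hn : G.birthday ≤ n) :
    IsLeast (Set.range fun m => Ls (G.add (wait m).conj)) (Ls (G.add (wait n).conj)) := by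
  refine ⟨⟨n, rfl⟩, Set.forall_mem_range.2 fun m => ?_⟩
  rcases le_total m n with h | h
  · exact Ls_add_conj_wait_antitone hG h
  · exact (Ls_add_conj_wait_eq_of_birthday_le hn h).ge

/-- For `n ≥ b(G)`, the pass-allowed stops are attained at `n` waiting moves:
`L̲s(G) = Ls(G - n̂)` and `R̄s(G) = Rs(G + n̂)`. -/
theorem passAllowed_stops_attained (G : SG) (hG : G.Guaranteed) (n : ℕ)
    (hn : G.birthday ≤ n) :
    G.lsU = Ls (G.add (wait n).conj) ∧ G.rsO = Rs (G.add (wait n)) := by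
  refine ⟨(isLeast_Ls_add_conj_wait hG hn).isGLB.ciInf_eq, ?_⟩
  have hconj := isLeast_Ls_add_conj_wait hG.conj ((birthday_conj G).trans_le hn)
  refine IsLUB.ciSup_eq (f := fun m => Rs (G.add (wait m)))
    (IsGreatest.isLUB ⟨⟨n, rfl⟩, Set.forall_mem_range.2 fun m => ?_⟩)
  rw [Rs_add_eq_neg_Ls_conj_add, Rs_add_eq_neg_Ls_conj_add, neg_le_neg_iff]
  exact hconj.2 (Set.mem_range_self m)

end SG
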